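/- Let T_1 and T_2 be tree-algebras, each with at least two elements, and let F_1 and F_2 be their associated forest-algebras. Then dis(T_1,T_2) = dis(F_1,F_2). -/

import Mathlib

/-- A monounary algebra: a type equipped with one unary operation. -/
structure MonoUnary : Type 1 where
  carrier : Type
  op : carrier → carrier

namespace MonoUnary

/-- The subalgebra of `A` generated by `X`: the closure of `X` under the operation. -/
def closure (A : MonoUnary) (X : Set A.carrier) : Set A.carrier :=
  {y | ∃ x ∈ X, ∃ n : ℕ, A.op^[n] x = y}

/-- Isomorphism of monounary algebras. -/
def Iso (A B : MonoUnary) : Prop :=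
  ∃ e : A.carrier ≃ B.carrier, ∀ x, e (A.op x) = B.op (e x)

/-- The monounary algebra induced on a subset closed under the operation. -/
def restrict (B : MonoUnary) (S : Set B.carrier) (hS : ∀ x ∈ S, B.op x ∈ S) : MonoUnary where
  carrier := ↥S
  op := fun x => ⟨B.op x.1, hS x.1 x.2⟩

/-- `A` is largely embeddable into `B`: `B` has a large subalgebra isomorphic to `A`,
i.e. a (nonempty, closed) subset `S` such that together with one extra element `b`
it generates the whole of `B`. -/
def LargeEmb (A B : MonoUnary) : Prop :=
  ∃ (S : Set B.carrier) (hS : ∀ x ∈ S, B.op x ∈ S), S.Nonempty ∧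
    Iso A (B.restrict S hS) ∧ ∃ b : B.carrier, B.closure (S ∪ {b}) = Set.univ

/-- One step in the network of large embeddings (symmetric closure of `⋖`). -/
def Step (A B : MonoUnary) : Prop := LargeEmb A B ∨ LargeEmb B A

/-- There is a path of length `n` between `A` and `B` in the network. -/
def HasPath (A B : MonoUnary) (n : ℕ) : Prop :=
  ∃ C : ℕ → MonoUnary, Iso (C 0) A ∧ Iso (C n) B ∧ ∀ i < n, Step (C i) (C (i + 1))

/-- The generator distance between monounary algebras, in `ℕ ∪ {∞}`. -/
noncomputable def dis (A B : MonoUnary) : ℕ∞ :=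
  sInf {q : ℕ∞ | ∃ n : ℕ, q = (n : ℕ∞) ∧ HasPath A B n}

/-- The minimum number of generators of `A`, `∞` if `A` is not finitely generated. -/
noncomputable def MGen (A : MonoUnary) : ℕ∞ :=
  sInf {q : ℕ∞ | ∃ X : Finset A.carrier, q = (X.card : ℕ∞) ∧ A.closure ↑X = Set.univ}

/-- A monounary algebra is connected iff any two elements have trajectories that meet. -/
def Connected (A : MonoUnary) : Prop :=
  ∀ a b : A.carrier, ∃ k m : ℕ, A.op^[k] a = A.op^[m] b

end MonoUnary

namespace MonoUnary

/-- The associated forest-algebra of a tree-algebra `T` with root `c` (a fixed point of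
the operation): underlying set `T \ {c}`, with `f'(x) = x` if `f x = c` and
`f'(x) = f x` otherwise. -/
noncomputable def forestOf (T : MonoUnary) (c : T.carrier) : MonoUnary where
  carrier := {x : T.carrier // x ≠ c}
  op := fun x =>
    letI : DecidableEq T.carrier := Classical.decEq _
    if h : T.op x.1 = c then x else ⟨T.op x.1, h⟩

end MonoUnary

/-!
Passing to the non-periodic part of an algebra (the elements off the cycles, each element mapped
into a cycle being made a fixed point) and adjoining a root to a forest (the fixed points are sent
to the new root) are mutually inverse between tree-algebras and forest-algebras, and both preserve
large embeddings, so paths between the trees and between the forests translate into each other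
with the same length. The one obstacle is that an algebra all of whose elements are periodic has
empty non-periodic part. A maximal run of such algebras inside a path between trees is replaced by
the disjoint union of the forests at its two ends: if a purely periodic algebra embeds largely into
`B`, the extra generator carries the whole non-periodic part of `B`, which is therefore generated
by one element, and so each end embeds largely into that union.
-/

open Function Set

theorem Function.Semiconj.mem_periodicPts_iff {α β : Type*} {fa : α → α} {fb : β → β}
    {g : α → β} (h : Semiconj g fa fb) (hg : Injective g) {x : α} :
    g x ∈ periodicPts fb ↔ x ∈ periodicPts fa :=
  ⟨fun ⟨n, hn, hx⟩ => ⟨n, hn, hg ((h.iterate_right n x).trans hx)⟩,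
    fun hx => h.mapsTo_periodicPts hx⟩

theorem exists_chain_append {α : Type*} {R : α → α → Prop} {D E : ℕ → α} {m k : ℕ}
    (hD : ∀ i < m, R (D i) (D (i + 1))) (hE : ∀ i < k, R (E i) (E (i + 1))) (hDE : D m = E 0) :
    ∃ F : ℕ → α, F 0 = D 0 ∧ F (m + k) = E k ∧ ∀ i < m + k, R (F i) (F (i + 1)) := by
  set F : ℕ → α := fun i => if i ≤ m then D i else E (i - m)
  have hF : ∀ i, m ≤ i → F i = E (i - m) := by
    intro i hi
    by_cases h : i ≤ m
    · obtain rfl : i = m := le_antisymm h hi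
      simpa [F] using hDE
    · simp [F, h]
  refine ⟨F, if_pos (Nat.zero_le m), by rw [hF _ (Nat.le_add_right m k), Nat.add_sub_cancel_left],
    fun i hi => ?_⟩
  rcases lt_or_ge i m with h | h
  · simpa [F, h.le, Nat.succ_le_of_lt h] using hD i h
  · rw [hF i h, hF (i + 1) (by omega), show i + 1 - m = i - m + 1 by omega]
    exact hE _ (by omega)

namespace MonoUnary

variable {A B : MonoUnary}

theorem Iso.trans {C : MonoUnary} (h : Iso A B) (h' : Iso B C) : Iso A C := by
  obtain ⟨e, he⟩ := h
  obtain ⟨e', he'⟩ := h'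
  exact ⟨e.trans e', fun x => by simp [he, he']⟩

theorem largeEmb_iff :
    LargeEmb A B ↔ Nonempty A.carrier ∧ ∃ f : A.carrier → B.carrier, Injective f ∧
      Semiconj f A.op B.op ∧ ∃ b, B.closure (range f ∪ {b}) = univ := by
  constructor
  · rintro ⟨S, hS, ⟨s, hs⟩, ⟨e, he⟩, b, hb⟩
    have hrange : range (fun x => (e x).1) = S := by
      ext y
      refine ⟨fun ⟨x, hx⟩ => hx ▸ (e x).2, fun hy => ⟨e.symm ⟨y, hy⟩, ?_⟩⟩
      exact congrArg Subtype.val (e.apply_symm_apply ⟨y, hy⟩)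
    refine ⟨⟨e.symm ⟨s, hs⟩⟩, fun x => (e x).1, fun x y h => e.injective (Subtype.ext h),
      fun x => congrArg Subtype.val (he x), b, ?_⟩
    rwa [hrange]
  · rintro ⟨⟨a⟩, f, hf, hfop, b, hb⟩
    refine ⟨range f, ?_, ⟨f a, a, rfl⟩, ⟨Equiv.ofInjective f hf, fun x => Subtype.ext (hfop x)⟩,
      b, hb⟩
    rintro _ ⟨x, rfl⟩
    exact ⟨A.op x, hfop x⟩

theorem step_self (hA : Nonempty A.carrier) : Step A A := by
  refine Or.inl (largeEmb_iff.2 ⟨hA, id, injective_id, fun _ => rfl, hA.some, ?_⟩)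
  exact eq_univ_of_forall fun y => ⟨y, Or.inl ⟨y, rfl⟩, 0, rfl⟩

theorem Step.symm (h : Step A B) : Step B A := Or.symm h

theorem dis_congr {A' B' : MonoUnary} (h : ∀ n, HasPath A B n ↔ HasPath A' B' n) :
    dis A B = dis A' B' := by
  simp only [dis, h]

def sum (A B : MonoUnary) : MonoUnary where
  carrier := A.carrier ⊕ B.carrier
  op := Sum.map A.op B.op

def IsMonogenic (A : MonoUnary) : Prop := ∃ b, A.closure {b} = univ

theorem largeEmb_of_range_union_range {C : MonoUnary} {f : A.carrier → C.carrier}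
    {g : B.carrier → C.carrier} (hA : Nonempty A.carrier) (hf : Injective f)
    (hfop : Semiconj f A.op C.op) (hgop : Semiconj g B.op C.op) (hB : IsMonogenic B)
    (hcover : range f ∪ range g = univ) : LargeEmb A C := by
  obtain ⟨b, hb⟩ := hB
  refine largeEmb_iff.2 ⟨hA, f, hf, hfop, g b, eq_univ_of_forall fun z => ?_⟩
  rcases hcover.symm ▸ mem_univ z with hz | ⟨y, rfl⟩
  · exact ⟨z, Or.inl hz, 0, rfl⟩
  · obtain ⟨_, hb', n, rfl⟩ : y ∈ B.closure {b} := hb ▸ mem_univ y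
    rw [mem_singleton_iff.1 hb']
    exact ⟨g b, Or.inr rfl, n, (hgop.iterate_right n b).symm⟩

theorem largeEmb_sum_left (hA : Nonempty A.carrier) (hB : IsMonogenic B) :
    LargeEmb A (sum A B) :=
  largeEmb_of_range_union_range (f := Sum.inl) (g := Sum.inr) hA Sum.inl_injective
    (fun _ => rfl) (fun _ => rfl) hB range_inl_union_range_inr

theorem largeEmb_sum_right (hA : IsMonogenic A) (hB : Nonempty B.carrier) :
    LargeEmb B (sum A B) :=
  largeEmb_of_range_union_range (f := Sum.inr) (g := Sum.inl) hB Sum.inr_injective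
    (fun _ => rfl) (fun _ => rfl) hA (union_comm _ _ ▸ range_inl_union_range_inr)

theorem closure_subset_periodicPts {X : Set A.carrier}
    (hX : X ⊆ periodicPts A.op) : A.closure X ⊆ periodicPts A.op := by
  rintro _ ⟨x, hx, n, rfl⟩
  exact ((bijOn_periodicPts A.op).mapsTo.iterate n) (hX hx)

def AllPeriodic (A : MonoUnary) : Prop := ∀ x, x ∈ periodicPts A.op

theorem Iso.allPeriodic (h : Iso A B) (hA : AllPeriodic A) : AllPeriodic B := by
  obtain ⟨e, he : Semiconj e A.op B.op⟩ := h
  intro y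
  simpa using he.mapsTo_periodicPts (hA (e.symm y))

theorem AllPeriodic.of_largeEmb (h : LargeEmb A B) (hB : AllPeriodic B) :
    AllPeriodic A := by
  obtain ⟨-, f, hf, hfop, -⟩ := largeEmb_iff.1 h
  exact fun x => (hfop.mem_periodicPts_iff hf).1 (hB (f x))

/-- The non-periodic part of `A`, every element mapped into a cycle being made a fixed point.
For a tree-algebra this is its associated forest-algebra (`forest_iso_forestOf`). -/
noncomputable def forest (A : MonoUnary) : MonoUnary where
  carrier := {x : A.carrier // x ∉ periodicPts A.op}
  op x :=
    letI := Classical.propDecidable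
    if h : A.op x.1 ∈ periodicPts A.op then x else ⟨A.op x.1, h⟩

theorem nonempty_forest (hA : ¬AllPeriodic A) : Nonempty (forest A).carrier := by
  obtain ⟨x, hx⟩ := not_forall.1 hA
  exact ⟨⟨x, hx⟩⟩

theorem forest_op_of_mem {x : (forest A).carrier} (h : A.op x.1 ∈ periodicPts A.op) :
    (forest A).op x = x :=
  dif_pos h

theorem forest_op_of_notMem {x : (forest A).carrier} (h : A.op x.1 ∉ periodicPts A.op) :
    (forest A).op x = ⟨A.op x.1, h⟩ :=
  dif_neg h

theorem forest_iterate (x : (forest A).carrier) {n : ℕ}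
    (hxn : A.op^[n] x.1 ∉ periodicPts A.op) : ((forest A).op^[n] x).1 = A.op^[n] x.1 := by
  induction n with
  | zero => rfl
  | succ n ih =>
    rw [iterate_succ_apply'] at hxn ⊢
    have hxn' : A.op^[n] x.1 ∉ periodicPts A.op := fun h => hxn ((bijOn_periodicPts A.op).mapsTo h)
    rw [forest_op_of_notMem (x := (forest A).op^[n] x) (by rwa [ih hxn'])]
    exact (congrArg A.op (ih hxn')).trans (iterate_succ_apply' A.op n x.1).symm

theorem forest_closure_eq_univ {X : Set A.carrier} {Y : Set (forest A).carrier}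
    (hX : A.closure X = univ) (hXY : ∀ x ∈ X, ∀ hx : x ∉ periodicPts A.op, ⟨x, hx⟩ ∈ Y) :
    (forest A).closure Y = univ := by
  refine eq_univ_of_forall fun ⟨y, hy⟩ => ?_
  obtain ⟨x, hxX, n, rfl⟩ : y ∈ A.closure X := hX ▸ mem_univ y
  have hx : x ∉ periodicPts A.op := fun h => hy ((bijOn_periodicPts A.op).mapsTo.iterate n h)
  exact ⟨⟨x, hx⟩, hXY x hxX hx, n, Subtype.ext (forest_iterate ⟨x, hx⟩ hy)⟩

section ForestMap

variable {f : A.carrier → B.carrier} (hf : Injective f) (hfop : Semiconj f A.op B.op)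

def forestMap : (forest A).carrier → (forest B).carrier :=
  fun x => ⟨f x.1, fun h => x.2 ((hfop.mem_periodicPts_iff hf).1 h)⟩

theorem forestMap_injective : Injective (forestMap hf hfop) :=
  fun _ _ h => Subtype.ext (hf (congrArg Subtype.val h))

theorem semiconj_forestMap : Semiconj (forestMap hf hfop) (forest A).op (forest B).op := by
  intro x
  by_cases hp : A.op x.1 ∈ periodicPts A.op
  · have hp' : B.op (f x.1) ∈ periodicPts B.op := hfop x.1 ▸ hfop.mapsTo_periodicPts hp
    rw [forest_op_of_mem hp, forest_op_of_mem hp']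
  · have hp' : B.op (f x.1) ∉ periodicPts B.op := by rwa [← hfop x.1, hfop.mem_periodicPts_iff hf]
    rw [forest_op_of_notMem hp, forest_op_of_notMem hp']
    exact Subtype.ext (hfop x.1)

end ForestMap

theorem forest_iso (h : Iso A B) : Iso (forest A) (forest B) := by
  obtain ⟨e, he : Semiconj e A.op B.op⟩ := h
  exact ⟨e.subtypeEquiv fun x => (he.mem_periodicPts_iff e.injective).not.symm,
    semiconj_forestMap e.injective he⟩

theorem forest_largeEmb (hA : ¬AllPeriodic A) (h : LargeEmb A B) :
    LargeEmb (forest A) (forest B) := by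
  obtain ⟨-, f, hf, hfop, b, hb⟩ := largeEmb_iff.1 h
  obtain ⟨a⟩ := nonempty_forest hA
  classical
  let b' : (forest B).carrier :=
    if hb' : b ∈ periodicPts B.op then forestMap hf hfop a else ⟨b, hb'⟩
  refine largeEmb_iff.2 ⟨⟨a⟩, forestMap hf hfop, forestMap_injective hf hfop,
    semiconj_forestMap hf hfop, b', forest_closure_eq_univ hb ?_⟩
  rintro x (⟨x, rfl⟩ | rfl) hx
  · exact Or.inl ⟨⟨x, fun h => hx ((hfop.mem_periodicPts_iff hf).2 h)⟩, rfl⟩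
  · exact Or.inr (dif_neg hx).symm

theorem isMonogenic_forest_of_largeEmb (hA : AllPeriodic A)
    (hB : ¬AllPeriodic B) (h : LargeEmb A B) : IsMonogenic (forest B) := by
  obtain ⟨-, f, hf, hfop, b, hb⟩ := largeEmb_iff.1 h
  have hrange : range f ⊆ periodicPts B.op := by
    rintro _ ⟨x, rfl⟩
    exact (hfop.mem_periodicPts_iff hf).2 (hA x)
  have hb' : b ∉ periodicPts B.op := by
    refine fun hbp => hB fun y => closure_subset_periodicPts ?_ (hb ▸ mem_univ y)
    exact union_subset hrange (singleton_subset_iff.2 hbp)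
  refine ⟨⟨b, hb'⟩, forest_closure_eq_univ hb ?_⟩
  rintro x (hx | rfl) hxp
  · exact absurd (hrange hx) hxp
  · rfl

theorem forest_step (h : Step A B) (hA : ¬AllPeriodic A)
    (hB : ¬AllPeriodic B) : Step (forest A) (forest B) :=
  h.imp (forest_largeEmb hA) (forest_largeEmb hB)

theorem isMonogenic_forest_of_step (h : Step A B) (hA : AllPeriodic A)
    (hB : ¬AllPeriodic B) : IsMonogenic (forest B) :=
  h.elim (isMonogenic_forest_of_largeEmb hA hB)
    fun h' => absurd (AllPeriodic.of_largeEmb h' hA) hB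

/-- A run `C 1, …, C (r - 1)` of purely periodic algebras becomes a constant run of the disjoint
union of the forests at its two ends. -/
theorem exists_forest_chain_of_segment {C : ℕ → MonoUnary} {r : ℕ}
    (hstep : ∀ i < r, Step (C i) (C (i + 1))) (h0 : ¬AllPeriodic (C 0))
    (hr : ¬AllPeriodic (C r)) (hmid : ∀ j, 0 < j → j < r → AllPeriodic (C j)) :
    ∃ D : ℕ → MonoUnary, D 0 = forest (C 0) ∧ D r = forest (C r) ∧
      ∀ i < r, Step (D i) (D (i + 1)) := by
  classical
  refine ⟨fun i => if AllPeriodic (C i) then sum (forest (C 0)) (forest (C r)) else forest (C i),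
    if_neg h0, if_neg hr, fun i hi => ?_⟩
  by_cases hi0 : AllPeriodic (C i) <;> by_cases hi1 : AllPeriodic (C (i + 1)) <;>
    simp only [hi0, hi1, if_true, if_false]
  · exact step_self ⟨Sum.inl (nonempty_forest h0).some⟩
  · obtain rfl : r = i + 1 := by
      by_contra hne
      exact hi1 (hmid (i + 1) (Nat.succ_pos i) (by omega))
    have hi : 0 < i := Nat.pos_of_ne_zero (by rintro rfl; exact h0 hi0)
    have hC1 : AllPeriodic (C 1) := hmid 1 Nat.one_pos (by omega)
    exact Or.inr (largeEmb_sum_right (isMonogenic_forest_of_step (hstep 0 (by omega)).symm hC1 h0)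
      (nonempty_forest hr))
  · obtain rfl : i = 0 := by
      by_contra hne
      exact hi0 (hmid i (by omega) hi)
    obtain ⟨k, rfl⟩ : ∃ k, r = k + 1 := ⟨r - 1, by omega⟩
    have hk : 0 < k := by
      by_contra hk
      obtain rfl : k = 0 := by omega
      exact hr hi1
    exact Or.inl (largeEmb_sum_left (nonempty_forest h0)
      (isMonogenic_forest_of_step (hstep k (by omega)) (hmid k hk (by omega)) hr))
  · exact forest_step (hstep i hi) hi0 hi1

theorem exists_forest_chain (n : ℕ) {C : ℕ → MonoUnary}
    (hstep : ∀ i < n, Step (C i) (C (i + 1))) (h0 : ¬AllPeriodic (C 0))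
    (hn : ¬AllPeriodic (C n)) :
    ∃ D : ℕ → MonoUnary, D 0 = forest (C 0) ∧ D n = forest (C n) ∧
      ∀ i < n, Step (D i) (D (i + 1)) := by
  induction n using Nat.strong_induction_on generalizing C with
  | _ n ih =>
    rcases Nat.eq_zero_or_pos n with rfl | hpos
    · exact ⟨fun i => forest (C i), rfl, rfl, fun i hi => absurd hi (Nat.not_lt_zero i)⟩
    classical
    have hex : ∃ r, 0 < r ∧ ¬AllPeriodic (C r) := ⟨n, hpos, hn⟩
    set r := Nat.find hex
    obtain ⟨hr0, hr⟩ : 0 < r ∧ ¬AllPeriodic (C r) := Nat.find_spec hex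
    have hrn : r ≤ n := Nat.find_min' hex ⟨hpos, hn⟩
    have hmid : ∀ j, 0 < j → j < r → AllPeriodic (C j) :=
      fun j hj hjr => not_not.1 fun h => Nat.find_min hex hjr ⟨hj, h⟩
    obtain ⟨D, hD0, hDr, hD⟩ :=
      exists_forest_chain_of_segment (fun i hi => hstep i (by omega)) h0 hr hmid
    obtain ⟨E, hE0, hEk, hE⟩ := ih (n - r) (by omega) (C := fun i => C (r + i))
      (fun i hi => hstep _ (by omega)) hr (by rwa [Nat.add_sub_cancel' hrn])
    obtain ⟨F, hF0, hFn, hF⟩ := exists_chain_append hD hE (hDr.trans hE0.symm)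
    rw [Nat.add_sub_cancel' hrn] at hFn hF hEk
    exact ⟨F, hF0.trans hD0, hFn.trans hEk, hF⟩

noncomputable def addRoot (A : MonoUnary) : MonoUnary where
  carrier := Option A.carrier
  op
    | none => none
    | some x => letI := Classical.propDecidable; if A.op x = x then none else some (A.op x)

theorem addRoot_op_some_of_eq {x : A.carrier} (h : A.op x = x) : (addRoot A).op (some x) = none :=
  if_pos h

theorem addRoot_op_some_of_ne {x : A.carrier} (h : A.op x ≠ x) :
    (addRoot A).op (some x) = some (A.op x) :=
  if_neg h

theorem exists_addRoot_iterate_eq (x : A.carrier) (n : ℕ) :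
    ∃ k, (addRoot A).op^[k] (some x) = some (A.op^[n] x) := by
  induction n with
  | zero => exact ⟨0, rfl⟩
  | succ n ih =>
    obtain ⟨k, hk⟩ := ih
    rw [iterate_succ_apply']
    by_cases h : A.op (A.op^[n] x) = A.op^[n] x
    · exact ⟨k, by rw [hk, h]⟩
    · refine ⟨k + 1, (iterate_succ_apply' (addRoot A).op k (some x)).trans ?_⟩
      rw [hk, addRoot_op_some_of_ne h]

theorem semiconj_optionMap {f : A.carrier → B.carrier} (hf : Injective f)
    (hfop : Semiconj f A.op B.op) : Semiconj (Option.map f) (addRoot A).op (addRoot B).op := by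
  rintro (_ | x)
  · rfl
  by_cases hx : A.op x = x
  · have hx' : B.op (f x) = f x := by rw [← hfop x, hx]
    rw [addRoot_op_some_of_eq hx, Option.map_some, addRoot_op_some_of_eq hx']
    rfl
  · have hx' : B.op (f x) ≠ f x := by rwa [← hfop x, hf.ne_iff]
    rw [addRoot_op_some_of_ne hx, Option.map_some, Option.map_some, addRoot_op_some_of_ne hx',
      hfop x]

theorem addRoot_iso (h : Iso A B) : Iso (addRoot A) (addRoot B) := by
  obtain ⟨e, he⟩ := h
  exact ⟨e.optionCongr, semiconj_optionMap e.injective he⟩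

theorem addRoot_largeEmb (h : LargeEmb A B) : LargeEmb (addRoot A) (addRoot B) := by
  obtain ⟨-, f, hf, hfop, b, hb⟩ := largeEmb_iff.1 h
  refine largeEmb_iff.2 ⟨⟨none⟩, Option.map f, Option.map_injective hf, semiconj_optionMap hf hfop,
    some b, eq_univ_of_forall ?_⟩
  rintro (_ | y)
  · exact ⟨none, Or.inl ⟨none, rfl⟩, 0, rfl⟩
  obtain ⟨x, hx, n, rfl⟩ : y ∈ B.closure (range f ∪ {b}) := hb ▸ mem_univ y
  obtain ⟨k, hk⟩ := exists_addRoot_iterate_eq x n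
  refine ⟨some x, ?_, k, hk⟩
  rcases hx with ⟨a, rfl⟩ | hx
  · exact Or.inl ⟨some a, rfl⟩
  · exact Or.inr (congrArg some hx)

section Tree

variable {T : MonoUnary} {c : T.carrier}

theorem mem_periodicPts_iff_eq_root (hT : Connected T) (hc : T.op c = c) {x : T.carrier} :
    x ∈ periodicPts T.op ↔ x = c := by
  refine ⟨fun hx => ?_, fun hx => ⟨1, Nat.one_pos, hx ▸ hc⟩⟩
  obtain ⟨k, m, hkm⟩ := hT x c
  rw [iterate_fixed hc] at hkm
  have hfix : IsPeriodicPt T.op 1 x :=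
    isPeriodicPt_of_mem_periodicPts_of_isPeriodicPt_iterate hx (hkm ▸ hc : IsPeriodicPt T.op 1 _)
  rwa [iterate_fixed (show T.op x = x from hfix)] at hkm

theorem not_allPeriodic_of_tree (hT : Connected T) (hc : T.op c = c) (hcard : ∃ x, x ≠ c) :
    ¬AllPeriodic T := by
  obtain ⟨x, hx⟩ := hcard
  exact fun h => hx ((mem_periodicPts_iff_eq_root hT hc).1 (h x))

theorem forestOf_op_of_eq {x : (forestOf T c).carrier} (h : T.op x.1 = c) :
    (forestOf T c).op x = x :=
  dif_pos h

theorem forestOf_op_of_ne {x : (forestOf T c).carrier} (h : T.op x.1 ≠ c) :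
    (forestOf T c).op x = ⟨T.op x.1, h⟩ :=
  dif_neg h

theorem forest_iso_forestOf (hT : Connected T) (hc : T.op c = c) :
    Iso (forest T) (forestOf T c) := by
  refine ⟨Equiv.subtypeEquivRight fun x => (mem_periodicPts_iff_eq_root hT hc).not, fun x => ?_⟩
  by_cases hx : T.op x.1 = c
  · rw [forest_op_of_mem ((mem_periodicPts_iff_eq_root hT hc).2 hx), forestOf_op_of_eq hx]
  · rw [forest_op_of_notMem ((mem_periodicPts_iff_eq_root hT hc).not.2 hx), forestOf_op_of_ne hx]
    rfl

theorem addRoot_forestOf_iso (hT : Connected T) (hc : T.op c = c) :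
    Iso (addRoot (forestOf T c)) T := by
  classical
  refine ⟨Equiv.optionSubtypeNe c, ?_⟩
  rintro (_ | x)
  · exact hc.symm
  by_cases hx : T.op x.1 = c
  · rw [addRoot_op_some_of_eq (forestOf_op_of_eq hx)]
    exact hx.symm
  · have hne : (forestOf T c).op x ≠ x := by
      rw [forestOf_op_of_ne hx]
      exact fun h =>
        x.2 ((mem_periodicPts_iff_eq_root hT hc).1 ⟨1, Nat.one_pos, congrArg Subtype.val h⟩)
    rw [addRoot_op_some_of_ne hne, forestOf_op_of_ne hx]
    rfl

end Tree

theorem hasPath_of_hasPath_forestOf {T₁ T₂ : MonoUnary} {c₁ : T₁.carrier} {c₂ : T₂.carrier}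
    (h₁ : Connected T₁) (h₂ : Connected T₂) (hc₁ : T₁.op c₁ = c₁) (hc₂ : T₂.op c₂ = c₂) {n : ℕ}
    (h : HasPath (forestOf T₁ c₁) (forestOf T₂ c₂) n) : HasPath T₁ T₂ n := by
  obtain ⟨C, h0, hn, hstep⟩ := h
  exact ⟨fun i => addRoot (C i), (addRoot_iso h0).trans (addRoot_forestOf_iso h₁ hc₁),
    (addRoot_iso hn).trans (addRoot_forestOf_iso h₂ hc₂),
    fun i hi => (hstep i hi).imp addRoot_largeEmb addRoot_largeEmb⟩

theorem hasPath_forestOf_of_hasPath {T₁ T₂ : MonoUnary} {c₁ : T₁.carrier} {c₂ : T₂.carrier}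
    (h₁ : Connected T₁) (h₂ : Connected T₂) (hc₁ : T₁.op c₁ = c₁) (hc₂ : T₂.op c₂ = c₂)
    (hcard₁ : ∃ x, x ≠ c₁) (hcard₂ : ∃ x, x ≠ c₂) {n : ℕ} (h : HasPath T₁ T₂ n) :
    HasPath (forestOf T₁ c₁) (forestOf T₂ c₂) n := by
  obtain ⟨C, h0, hn, hstep⟩ := h
  obtain ⟨D, hD0, hDn, hD⟩ := exists_forest_chain n hstep
    (fun hp => not_allPeriodic_of_tree h₁ hc₁ hcard₁ (h0.allPeriodic hp))
    (fun hp => not_allPeriodic_of_tree h₂ hc₂ hcard₂ (hn.allPeriodic hp))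
  exact ⟨D, hD0 ▸ (forest_iso h0).trans (forest_iso_forestOf h₁ hc₁),
    hDn ▸ (forest_iso hn).trans (forest_iso_forestOf h₂ hc₂), hD⟩

end MonoUnary

open MonoUnary in
/-- if `T₁`, `T₂` are tree-algebras (connected monounary algebras with a
fixed point `c₁` resp. `c₂` of the operation, the root) having at least two elements,
then the distance between them equals the distance between their associated
forest-algebras. -/
theorem dis_tree_eq_dis_forest (T₁ T₂ : MonoUnary)
    (h₁ : Connected T₁) (h₂ : Connected T₂)
    (c₁ : T₁.carrier) (c₂ : T₂.carrier) (hc₁ : T₁.op c₁ = c₁) (hc₂ : T₂.op c₂ = c₂)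
    (hcard₁ : ∃ x : T₁.carrier, x ≠ c₁) (hcard₂ : ∃ x : T₂.carrier, x ≠ c₂) :
    dis T₁ T₂ = dis (forestOf T₁ c₁) (forestOf T₂ c₂) :=
  dis_congr fun _ => ⟨hasPath_forestOf_of_hasPath h₁ h₂ hc₁ hc₂ hcard₁ hcard₂,
    hasPath_of_hasPath_forestOf h₁ h₂ hc₁ hc₂⟩
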